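/- arXiv:2205.15695 — 5 statements merged into one kernel-verified Lean document; each statement's English description precedes it below -/
import Mathlib

section
/- Let K ≥ 1 and n ≥ 1, and let 0 < λ_1 ≤ λ_2 ≤ … ≤ λ_K. For each type k ∈ {1,…,K} let P_1^k, …, P_n^k be mutually independent random variables (across all types and indices), with P_i^k exponentially distributed with mean λ_k. Define the optimal flow time C_OPT = Σ_j P_j + Σ_{i<j} min(P_i, P_j), where P_1, …, P_N (N = nK) enumerates all the jobs. Then E[C_OPT] = n²·( Σ_{ℓ=1}^K λ_ℓ/4 + Σ_{ℓ=1}^K Σ_{k=ℓ+1}^K λ_k λ_ℓ/(λ_k + λ_ℓ) ) + (3n/4)·Σ_{ℓ=1}^K λ_ℓ. -/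
/-!
By linearity, `E[C_OPT]` is the sum of the means `λ_k` of the jobs plus the sum over pairs of
jobs of `E[min(P_i, P_j)]`. The survival function of the minimum of two independent
exponentials is the product of theirs, so the minimum is exponential with rate `1/λ_k + 1/λ_l`,
and its mean, computed by the layer-cake formula, is `λ_k λ_l / (λ_k + λ_l)`. What is left is
counting: two distinct types meet in `n²` pairs of jobs, and a type meets itself in
`n(n-1)/2` pairs, each contributing `λ_k / 2`.
-/

open MeasureTheory ProbabilityTheory Finset

namespace Finset

variable {α M : Type*} [Fintype α] [LinearOrder α] [LocallyFiniteOrderTop α]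
  [LocallyFiniteOrderBot α] [AddCommMonoid M]

theorem sum_sum_eq_two_nsmul_sum_sum_Ioi_add_sum_diag {F : α → α → M}
    (hF : ∀ i j, F i j = F j i) :
    ∑ i, ∑ j, F i j = 2 • ∑ i, ∑ j ∈ Ioi i, F i j + ∑ i, F i i := by
  have hrow (i : α) : ∑ j, F i j = ∑ j ∈ {i}ᶜ, F j i + F i i := by
    rw [← sum_singleton (fun j => F j i) i, sum_compl_add_sum]
    exact sum_congr rfl fun j _ => hF i j
  simp only [hrow, sum_add_distrib, ← sum_sum_Ioi_add_eq_sum_sum_off_diag, hF _ (_ : α),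
    two_nsmul]

end Finset

theorem Equiv.sum_comp_fst {ι β γ M : Type*} [Fintype ι] [Fintype β] [Fintype γ]
    [AddCommMonoid M] (e : ι ≃ β × γ) (f : β → M) :
    ∑ a, f (e a).1 = Fintype.card γ • ∑ b, f b := by
  rw [e.sum_comp (fun p => f p.1), Fintype.sum_prod_type, smul_sum]
  simp

theorem Equiv.two_nsmul_sum_sum_Ioi_comp_fst_add {ι β γ M : Type*} [Fintype ι] [LinearOrder ι]
    [LocallyFiniteOrderTop ι] [LocallyFiniteOrderBot ι] [Fintype β] [LinearOrder β]
    [LocallyFiniteOrderTop β] [LocallyFiniteOrderBot β] [Fintype γ] [AddCommMonoid M]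
    (e : ι ≃ β × γ) {F : β → β → M} (hF : ∀ k l, F k l = F l k) :
    2 • ∑ i, ∑ j ∈ Ioi i, F (e i).1 (e j).1 + Fintype.card γ • ∑ k, F k k =
      Fintype.card γ ^ 2 • (2 • ∑ k, ∑ l ∈ Ioi k, F k l + ∑ k, F k k) := by
  rw [← e.sum_comp_fst (fun k => F k k), ← sum_sum_eq_two_nsmul_sum_sum_Ioi_add_sum_diag hF,
    ← sum_sum_eq_two_nsmul_sum_sum_Ioi_add_sum_diag fun _ _ => hF _ _]
  simp only [e.sum_comp_fst (F (e _).1), e.sum_comp_fst fun k => Fintype.card γ • ∑ l, F k l]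
  rw [← smul_sum, smul_smul, sq]

namespace ProbabilityTheory

lemma expMeasure_Ioi {r : ℝ} (hr : 0 < r) {t : ℝ} (ht : 0 ≤ t) :
    expMeasure r (Set.Ioi t) = ENNReal.ofReal (Real.exp (-(r * t))) := by
  have := isProbabilityMeasure_expMeasure hr
  rw [← Set.compl_Iic, prob_compl_eq_one_sub measurableSet_Iic, ← ofReal_cdf,
    ← ENNReal.ofReal_one, ← ENNReal.ofReal_sub _ (cdf_nonneg _ t), cdf_expMeasure_eq hr,
    if_pos ht, sub_sub_cancel]

lemma ae_nonneg_expMeasure (r : ℝ) : ∀ᵐ x ∂expMeasure r, 0 ≤ x := by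
  simp only [ae_iff, not_le]
  rw [show {x : ℝ | x < 0} = Set.Iio 0 from rfl, expMeasure, gammaMeasure,
    withDensity_apply _ measurableSet_Iio]
  exact lintegral_exponentialPDF_of_nonpos le_rfl

variable {Ω : Type*} [MeasurableSpace Ω] {μ : Measure Ω}

def HasExpTail (μ : Measure Ω) (X : Ω → ℝ) (r : ℝ) : Prop :=
  (∀ᵐ ω ∂μ, 0 ≤ X ω) ∧ ∀ t, 0 < t → μ (X ⁻¹' Set.Ioi t) = ENNReal.ofReal (Real.exp (-(r * t)))

theorem HasExpTail.of_map_eq_expMeasure {X : Ω → ℝ} {r : ℝ} (hr : 0 < r) (hX : Measurable X)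
    (hd : μ.map X = expMeasure r) : HasExpTail μ X r := by
  refine ⟨ae_of_ae_map hX.aemeasurable (hd ▸ ae_nonneg_expMeasure r), fun t ht => ?_⟩
  rw [← Measure.map_apply hX measurableSet_Ioi, hd, expMeasure_Ioi hr ht.le]

theorem IndepFun.hasExpTail_min {X Y : Ω → ℝ} {a b : ℝ} (hXY : IndepFun X Y μ)
    (hX : HasExpTail μ X a) (hY : HasExpTail μ Y b) :
    HasExpTail μ (fun ω => min (X ω) (Y ω)) (a + b) := by
  refine ⟨?_, fun t ht => ?_⟩
  · filter_upwards [hX.1, hY.1] with ω hXω hYω using le_min hXω hYω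
  · have hset : (fun ω => min (X ω) (Y ω)) ⁻¹' Set.Ioi t =
        X ⁻¹' Set.Ioi t ∩ Y ⁻¹' Set.Ioi t := by
      ext; simp
    rw [hset, hXY.measure_inter_preimage_eq_mul _ _ measurableSet_Ioi measurableSet_Ioi,
      hX.2 t ht, hY.2 t ht, ← ENNReal.ofReal_mul (Real.exp_pos _).le, ← Real.exp_add, add_mul,
      neg_add]

theorem HasExpTail.integrable_and_integral_eq {X : Ω → ℝ} {r : ℝ} (hr : 0 < r)
    (hXm : AEMeasurable X μ) (hX : HasExpTail μ X r) : Integrable X μ ∧ ∫ ω, X ω ∂μ = r⁻¹ := by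
  have hint : IntegrableOn (fun t => Real.exp (-(r * t))) (Set.Ioi 0) := by
    simpa [neg_mul] using exp_neg_integrableOn_Ioi 0 hr
  have hI : ∫ t in Set.Ioi 0, Real.exp (-(r * t)) = r⁻¹ := by
    have h0 := integral_comp_mul_left_Ioi (fun x => Real.exp (-x)) 0 hr
    rwa [mul_zero, integral_exp_neg_Ioi, neg_zero, Real.exp_zero, smul_eq_mul, mul_one] at h0
  have hlin : ∫⁻ ω, ENNReal.ofReal (X ω) ∂μ = ENNReal.ofReal r⁻¹ := by
    rw [lintegral_eq_lintegral_meas_lt μ hX.1 hXm,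
      setLIntegral_congr_fun (f := fun t => μ {ω | t < X ω}) measurableSet_Ioi hX.2,
      ← ofReal_integral_eq_lintegral_ofReal hint (ae_of_all _ fun t => (Real.exp_pos _).le), hI]
  have hfin : HasFiniteIntegral X μ := by
    rw [hasFiniteIntegral_iff_ofReal hX.1, hlin]; exact ENNReal.ofReal_lt_top
  refine ⟨⟨hXm.aestronglyMeasurable, hfin⟩, ?_⟩
  rw [integral_eq_lintegral_of_nonneg_ae hX.1 hXm.aestronglyMeasurable, hlin,
    ENNReal.toReal_ofReal (by positivity)]

theorem integrable_and_integral_eq_of_map_eq_expMeasure {X : Ω → ℝ} {a : ℝ} (ha : 0 < a)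
    (hX : Measurable X) (hd : μ.map X = expMeasure (1 / a)) :
    Integrable X μ ∧ ∫ ω, X ω ∂μ = a := by
  have htail := HasExpTail.of_map_eq_expMeasure (one_div_pos.2 ha) hX hd
  simpa using htail.integrable_and_integral_eq (one_div_pos.2 ha) hX.aemeasurable

theorem IndepFun.integrable_and_integral_min_eq {X Y : Ω → ℝ} {a b : ℝ}
    (hXY : IndepFun X Y μ) (ha : 0 < a) (hb : 0 < b) (hX : Measurable X) (hY : Measurable Y)
    (hdX : μ.map X = expMeasure (1 / a)) (hdY : μ.map Y = expMeasure (1 / b)) :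
    Integrable (fun ω => min (X ω) (Y ω)) μ ∧ ∫ ω, min (X ω) (Y ω) ∂μ = a * b / (a + b) := by
  obtain ⟨hint, hmean⟩ := (hXY.hasExpTail_min (.of_map_eq_expMeasure (one_div_pos.2 ha) hX hdX)
    (.of_map_eq_expMeasure (one_div_pos.2 hb) hY hdY)).integrable_and_integral_eq
    (by positivity) (hX.min hY).aemeasurable
  refine ⟨hint, hmean.trans ?_⟩
  field_simp
  ring

theorem integral_sum_add_sum_sum_Ioi_min {ι : Type*} [Fintype ι] [LinearOrder ι]
    [LocallyFiniteOrderTop ι] {X : ι → Ω → ℝ} {m : ι → ℝ} {c : ι → ι → ℝ}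
    (hX : ∀ i, Integrable (X i) μ ∧ ∫ ω, X i ω ∂μ = m i)
    (hmin : ∀ i j, i < j →
      Integrable (fun ω => min (X i ω) (X j ω)) μ ∧ ∫ ω, min (X i ω) (X j ω) ∂μ = c i j) :
    ∫ ω, (∑ i, X i ω + ∑ i, ∑ j ∈ Ioi i, min (X i ω) (X j ω)) ∂μ =
      ∑ i, m i + ∑ i, ∑ j ∈ Ioi i, c i j := by
  have hrow (i : ι) : Integrable (fun ω => ∑ j ∈ Ioi i, min (X i ω) (X j ω)) μ :=
    integrable_finsetSum _ fun j hj => (hmin i j (mem_Ioi.1 hj)).1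
  rw [integral_add (integrable_finsetSum _ fun i _ => (hX i).1)
    (integrable_finsetSum _ fun i _ => hrow i), integral_finsetSum _ fun i _ => (hX i).1,
    integral_finsetSum _ fun i _ => hrow i]
  congr 1
  · exact sum_congr rfl fun i _ => (hX i).2
  · refine sum_congr rfl fun i _ => ?_
    rw [integral_finsetSum _ fun j hj => (hmin i j (mem_Ioi.1 hj)).1]
    exact sum_congr rfl fun j hj => (hmin i j (mem_Ioi.1 hj)).2

end ProbabilityTheory

theorem stmt_0_general
    {Ω : Type*} [MeasurableSpace Ω] (μ : Measure Ω) [IsProbabilityMeasure μ]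
    (K n : ℕ)
    (lam : Fin K → ℝ) (hpos : ∀ k, 0 < lam k)
    (P : Fin K → Fin n → Ω → ℝ)
    (hmeas : ∀ k i, Measurable (P k i))
    (hdist : ∀ k i, Measure.map (P k i) μ = expMeasure (1 / lam k))
    (hindep : iIndepFun (m := fun _ : Fin K × Fin n => Real.measurableSpace)
      (fun p : Fin K × Fin n => P p.1 p.2) μ)
    (e : Fin (n * K) ≃ Fin K × Fin n)
    (COPT : Ω → ℝ)
    (hCOPT : ∀ ω, COPT ω =
      (∑ j : Fin (n * K), P (e j).1 (e j).2 ω) +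
      ∑ i : Fin (n * K), ∑ j ∈ Finset.Ioi i,
        min (P (e i).1 (e i).2 ω) (P (e j).1 (e j).2 ω)) :
    ∫ ω, COPT ω ∂μ =
      (n : ℝ) ^ 2 * ((∑ l, lam l / 4) +
        ∑ l, ∑ k ∈ Finset.Ioi l, lam k * lam l / (lam k + lam l)) +
      (3 * n / 4) * ∑ l, lam l := by
  set F : Fin K → Fin K → ℝ := fun l k => lam k * lam l / (lam k + lam l) with hF
  have hF_symm (k l : Fin K) : F k l = F l k := by simp only [hF]; ring
  have hF_diag (k : Fin K) : F k k = lam k / 2 := by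
    have := hpos k
    simp only [hF]
    field_simp
    ring
  have hmin (i j : Fin (n * K)) (hij : i < j) :
      Integrable (fun ω => min (P (e i).1 (e i).2 ω) (P (e j).1 (e j).2 ω)) μ ∧
        ∫ ω, min (P (e i).1 (e i).2 ω) (P (e j).1 (e j).2 ω) ∂μ = F (e i).1 (e j).1 := by
    rw [hF_symm]
    exact (hindep.indepFun (e.injective.ne hij.ne)).integrable_and_integral_min_eq (hpos _)
      (hpos _) (hmeas _ _) (hmeas _ _) (hdist _ _) (hdist _ _)
  rw [integral_congr_ae (ae_of_all _ hCOPT), integral_sum_add_sum_sum_Ioi_min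
    (fun j => integrable_and_integral_eq_of_map_eq_expMeasure (hpos _) (hmeas _ _) (hdist _ _))
    hmin, e.sum_comp_fst lam]
  have hpairs := e.two_nsmul_sum_sum_Ioi_comp_fst_add hF_symm
  simp only [Fintype.card_fin, hF_diag, ← sum_div, nsmul_eq_mul, Nat.cast_pow,
    Nat.cast_ofNat] at hpairs ⊢
  linear_combination (1 / 2 : ℝ) * hpairs

/-- Expected flow time of the optimal (shortest-realized-duration-first) schedule
for `K` job types with `n` independent exponential jobs per type. -/
theorem stmt_0
    {Ω : Type*} [MeasurableSpace Ω] (μ : Measure Ω) [IsProbabilityMeasure μ]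
    (K n : ℕ) (hK : 1 ≤ K) (hn : 1 ≤ n)
    (lam : Fin K → ℝ) (hpos : ∀ k, 0 < lam k) (hmono : Monotone lam)
    (P : Fin K → Fin n → Ω → ℝ)
    (hmeas : ∀ k i, Measurable (P k i))
    (hdist : ∀ k i, Measure.map (P k i) μ = expMeasure (1 / lam k))
    (hindep : iIndepFun (m := fun _ : Fin K × Fin n => Real.measurableSpace)
      (fun p : Fin K × Fin n => P p.1 p.2) μ)
    (e : Fin (n * K) ≃ Fin K × Fin n)
    (COPT : Ω → ℝ)
    (hCOPT : ∀ ω, COPT ω =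
      (∑ j : Fin (n * K), P (e j).1 (e j).2 ω) +
      ∑ i : Fin (n * K), ∑ j ∈ Finset.Ioi i,
        min (P (e i).1 (e i).2 ω) (P (e j).1 (e j).2 ω)) :
    ∫ ω, COPT ω ∂μ =
      (n : ℝ) ^ 2 * ((∑ l, lam l / 4) +
        ∑ l, ∑ k ∈ Finset.Ioi l, lam k * lam l / (lam k + lam l)) +
      (3 * n / 4) * ∑ l, lam l :=
  stmt_0_general μ K n lam hpos P hmeas hdist hindep e COPT hCOPT
end

section
/- There exist an integer K ≥ 1 and reals 0 < λ_1 ≤ λ_2 ≤ … ≤ λ_K such that ( (1/2)·Σ_{ℓ=1}^K λ_ℓ + Σ_{ℓ=1}^K (K − ℓ)·λ_ℓ ) / ( (1/4)·Σ_{ℓ=1}^K λ_ℓ + Σ_{ℓ=1}^K Σ_{k=ℓ+1}^K λ_k λ_ℓ/(λ_k + λ_ℓ) ) ≤ 1.274. -/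
/-!
Take `λ_l = 1 / (K + 1 - l)²`. Reindexing by `j = K + 1 - l`, the numerator becomes
`H - S / 2` and the denominator `S / 4 + T`, where `H = ∑ 1/j`, `S = ∑ 1/j² ≤ 2` and
`T = ∑_{i<j} 1/(i² + j²)`. Comparing each inner sum `∑_{i<j} 1/(i² + j²)` with the integral
`∫₀¹ dt / (j (1 + t²)) = π / (4j)` gives `T ≥ (π/4) H - S`, so the ratio tends to `4/π < 1.274`
as `H → ∞`; it is already below `1.274` once `H ≥ 2400`.
-/

open Finset Real

lemma Real.arctan_le_self {x : ℝ} (hx : 0 ≤ x) : arctan x ≤ x := by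
  simpa only [tan_arctan] using le_tan (arctan_nonneg.2 hx) (arctan_lt_pi_div_two x)

lemma Real.arctan_sub_arctan_le {x y : ℝ} (hx : 0 ≤ x) (hxy : x ≤ y) :
    arctan y - arctan x ≤ (y - x) / (1 + x ^ 2) := by
  have hxy' : 0 < 1 + x * y := by nlinarith
  calc arctan y - arctan x = arctan ((y - x) / (1 + x * y)) := by
        rw [sub_eq_add_neg, ← arctan_neg, arctan_add (by nlinarith)]
        congr 2; ring
    _ ≤ (y - x) / (1 + x * y) := arctan_le_self (div_nonneg (by linarith) hxy'.le)
    _ ≤ (y - x) / (1 + x ^ 2) := by gcongr; nlinarith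

/-- Riemann-sum comparison with `∫₀¹ dt / (1 + t²) = π / 4`. -/
lemma pi_div_four_div_le_sum_range {b : ℕ} (hb : 0 < b) :
    π / 4 / b ≤ ∑ a ∈ range b, ((a : ℝ) ^ 2 + (b : ℝ) ^ 2)⁻¹ := by
  have hb' : (0 : ℝ) < b := by exact_mod_cast hb
  have arctan_step_le (a : ℕ) :
      (arctan (((a + 1 : ℕ) : ℝ) / b) - arctan ((a : ℝ) / b)) / b ≤
        ((a : ℝ) ^ 2 + (b : ℝ) ^ 2)⁻¹ := by
    have h := arctan_sub_arctan_le (x := (a : ℝ) / b) (y := ((a + 1 : ℕ) : ℝ) / b)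
      (by positivity) (by gcongr; simp)
    calc _ ≤ ((((a + 1 : ℕ) : ℝ) / b - (a : ℝ) / b) / (1 + ((a : ℝ) / b) ^ 2)) / b := by gcongr
      _ = ((a : ℝ) ^ 2 + (b : ℝ) ^ 2)⁻¹ := by push_cast; field_simp; ring
  calc π / 4 / b
        = ∑ a ∈ range b, (arctan (((a + 1 : ℕ) : ℝ) / b) - arctan ((a : ℝ) / b)) / b := by
        rw [← sum_div, sum_range_sub (fun a : ℕ => arctan ((a : ℝ) / b)), div_self hb'.ne']
        simp [arctan_one]
    _ ≤ _ := sum_le_sum fun a _ => arctan_step_le a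

lemma pi_div_four_mul_sum_inv_sub_le {K : ℕ} :
    π / 4 * ∑ j ∈ Icc 1 K, (j : ℝ)⁻¹ - ∑ j ∈ Icc 1 K, ((j : ℝ) ^ 2)⁻¹ ≤
      ∑ j ∈ Icc 1 K, ∑ i ∈ Ico 1 j, ((i : ℝ) ^ 2 + (j : ℝ) ^ 2)⁻¹ := by
  rw [mul_sum, ← sum_sub_distrib]
  refine sum_le_sum fun j hj => ?_
  have hj : 0 < j := (mem_Icc.1 hj).1
  have h := pi_div_four_div_le_sum_range hj
  rw [sum_range_eq_add_Ico _ hj] at h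
  rw [Nat.cast_zero, zero_pow two_ne_zero, zero_add] at h
  rw [← div_eq_mul_inv]
  linarith

lemma sum_Icc_inv_sq_le_two (K : ℕ) : ∑ j ∈ Icc 1 K, ((j : ℝ) ^ 2)⁻¹ ≤ 2 := by
  have h : Icc 1 K = (Ioo 0 (K + 1) : Finset ℕ) := by ext; simp; omega
  simpa [h] using sum_Ioo_inv_sq_le (α := ℝ) 0 (K + 1)

lemma exists_le_sum_Icc_inv (C : ℝ) : ∃ K : ℕ, 1 ≤ K ∧ C ≤ ∑ j ∈ Icc 1 K, (j : ℝ)⁻¹ := by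
  refine ⟨⌈exp C⌉₊ + 1, le_add_self, ?_⟩
  have h := log_add_one_le_harmonic (⌈exp C⌉₊ + 1)
  simp only [harmonic_eq_sum_Icc, Rat.cast_sum, Rat.cast_inv, Rat.cast_natCast] at h
  calc C = log (exp C) := (log_exp C).symm
    _ ≤ log ((⌈exp C⌉₊ + 1 + 1 : ℕ) : ℝ) := by
        gcongr
        push_cast
        linarith [Nat.le_ceil (exp C)]
    _ ≤ _ := h

section Reflect

variable {M : Type*} [AddCommMonoid M]

lemma sum_Icc_one_reflect (K : ℕ) (f : ℕ → M) :
    ∑ l ∈ Icc 1 K, f (K + 1 - l) = ∑ j ∈ Icc 1 K, f j := by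
  apply sum_nbij' (K + 1 - ·) (K + 1 - ·) <;> intro a ha <;> simp only [mem_Icc] at * <;> omega

lemma sum_Icc_sum_Icc_succ_reflect (K : ℕ) (F : ℕ → ℕ → M) :
    ∑ l ∈ Icc 1 K, ∑ k ∈ Icc (l + 1) K, F k l =
      ∑ j ∈ Icc 1 K, ∑ i ∈ Ico 1 j, F (K + 1 - i) (K + 1 - j) := by
  rw [← sum_Icc_one_reflect K]
  refine sum_congr rfl fun j hj => ?_
  simp only [mem_Icc] at hj
  apply sum_nbij' (K + 1 - ·) (K + 1 - ·) <;> intro a ha <;> simp only [mem_Icc, mem_Ico] at * <;>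
    first | omega | (congr 1; omega)

end Reflect

noncomputable def reversedInvSq (K l : ℕ) : ℝ := (((K + 1 - l : ℕ) : ℝ) ^ 2)⁻¹

section ReversedInvSq

variable {K : ℕ}

lemma reversedInvSq_pos {l : ℕ} (hl : l ≤ K) : 0 < reversedInvSq K l := by
  have : 0 < K + 1 - l := by omega
  unfold reversedInvSq
  positivity

lemma reversedInvSq_mono {k l : ℕ} (hkl : k ≤ l) (hl : l ≤ K) :
    reversedInvSq K k ≤ reversedInvSq K l := by
  have : 0 < K + 1 - l := by omega
  unfold reversedInvSq
  gcongr

lemma reversedInvSq_reflect {j : ℕ} (hj : j ≤ K + 1) :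
    reversedInvSq K (K + 1 - j) = ((j : ℝ) ^ 2)⁻¹ := by
  rw [reversedInvSq, Nat.sub_sub_self hj]

lemma sum_reversedInvSq :
    ∑ l ∈ Icc 1 K, reversedInvSq K l = ∑ j ∈ Icc 1 K, ((j : ℝ) ^ 2)⁻¹ := by
  rw [← sum_Icc_one_reflect K]
  exact sum_congr rfl fun j hj => reversedInvSq_reflect (by simp at hj; omega)

lemma sum_sub_mul_reversedInvSq :
    ∑ l ∈ Icc 1 K, ((K : ℝ) - l) * reversedInvSq K l =
      ∑ j ∈ Icc 1 K, (j : ℝ)⁻¹ - ∑ j ∈ Icc 1 K, ((j : ℝ) ^ 2)⁻¹ := by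
  rw [← sum_Icc_one_reflect K, ← sum_sub_distrib]
  refine sum_congr rfl fun j hj => ?_
  simp only [mem_Icc] at hj
  have hj0 : (j : ℝ) ≠ 0 := Nat.cast_ne_zero.2 (by omega)
  rw [reversedInvSq_reflect (by omega), Nat.cast_sub (by omega)]
  push_cast
  field_simp
  ring

lemma sum_pairs_reversedInvSq :
    ∑ l ∈ Icc 1 K, ∑ k ∈ Icc (l + 1) K,
        reversedInvSq K k * reversedInvSq K l / (reversedInvSq K k + reversedInvSq K l) =
      ∑ j ∈ Icc 1 K, ∑ i ∈ Ico 1 j, ((i : ℝ) ^ 2 + (j : ℝ) ^ 2)⁻¹ := by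
  rw [sum_Icc_sum_Icc_succ_reflect K
    (fun k l => reversedInvSq K k * reversedInvSq K l / (reversedInvSq K k + reversedInvSq K l))]
  refine sum_congr rfl fun j hj => sum_congr rfl fun i hi => ?_
  simp only [mem_Icc, mem_Ico] at hj hi
  have hi0 : (i : ℝ) ≠ 0 := Nat.cast_ne_zero.2 (by omega)
  have hj0 : (j : ℝ) ≠ 0 := Nat.cast_ne_zero.2 (by omega)
  rw [reversedInvSq_reflect (by omega), reversedInvSq_reflect (by omega)]
  field_simp
  ring

end ReversedInvSq

lemma ftpp_ratio_le {S H T : ℝ} (hS : S ≤ 2) (hH : 2400 ≤ H)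
    (hT : π / 4 * H - S ≤ T) :
    (1 / 2 * S + (H - S)) / (1 / 4 * S + T) ≤ 1.274 := by
  have hpi := pi_gt_d6
  have hden : π / 4 * H - 3 / 4 * S ≤ 1 / 4 * S + T := by linarith
  rw [div_le_iff₀ (by nlinarith)]
  nlinarith [mul_le_mul_of_nonneg_left hden (by norm_num : (0 : ℝ) ≤ 1.274),
    mul_le_mul_of_nonneg_right hpi.le (by linarith : (0 : ℝ) ≤ H)]

/-- There exist `K ≥ 1` and `0 < λ_1 ≤ … ≤ λ_K` for which the FTPP
competitive-ratio bound `2 - f_K(λ)` is at most `1.274`. -/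
theorem stmt_7 :
    ∃ (K : ℕ), 1 ≤ K ∧ ∃ lam : ℕ → ℝ,
      (∀ k ∈ Finset.Icc 1 K, 0 < lam k) ∧
      (∀ k l, 1 ≤ k → k ≤ l → l ≤ K → lam k ≤ lam l) ∧
      ((1 / 2) * (∑ l ∈ Finset.Icc 1 K, lam l) +
          ∑ l ∈ Finset.Icc 1 K, ((K : ℝ) - l) * lam l) /
        ((1 / 4) * (∑ l ∈ Finset.Icc 1 K, lam l) +
          ∑ l ∈ Finset.Icc 1 K, ∑ k ∈ Finset.Icc (l + 1) K,
            lam k * lam l / (lam k + lam l)) ≤ 1.274 := by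
  obtain ⟨K, hK, hH⟩ := exists_le_sum_Icc_inv 2400
  refine ⟨K, hK, reversedInvSq K, fun k hk => reversedInvSq_pos (mem_Icc.1 hk).2,
    fun k l _ hkl hl => reversedInvSq_mono hkl hl, ?_⟩
  rw [sum_reversedInvSq, sum_sub_mul_reversedInvSq, sum_pairs_reversedInvSq]
  exact ftpp_ratio_le (sum_Icc_inv_sq_le_two K) hH pi_div_four_mul_sum_inv_sub_le
end

section
/- Let a > 0 and b > 0, and let g : [0, ∞) → [0, ∞) be a measurable function satisfying 0 ≤ g(t) ≤ t for all t ≥ 0. Then max( ∫_0^∞ exp(−g(t)/a − (t − g(t))/b) dt , ∫_0^∞ exp(−g(t)/b − (t − g(t))/a) dt ) ≥ 2ab/(a + b). -/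
/-!
Whatever the allocation `g`, the two exponents add up to `-(1/a + 1/b) t`, so by AM-GM the sum
of the two integrands dominates `2 exp (-(1/a + 1/b) t / 2)`, whose integral is `4ab/(a+b)`.
The larger of the two integrals is therefore at least half of that. Both integrands are bounded
by `exp (-min (1/a) (1/b) t)`, which makes them integrable.
-/

open MeasureTheory Real Set

lemma two_mul_exp_add_half_le (u v : ℝ) : 2 * exp ((u + v) / 2) ≤ exp u + exp v := by
  have hsq (w : ℝ) : exp (w / 2) ^ 2 = exp w := by rw [sq, ← exp_add, add_halves]
  calc 2 * exp ((u + v) / 2) = 2 * exp (u / 2) * exp (v / 2) := by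
        rw [mul_assoc, ← exp_add, add_div]
    _ ≤ exp (u / 2) ^ 2 + exp (v / 2) ^ 2 := two_mul_le_add_sq _ _
    _ = exp u + exp v := by rw [hsq, hsq]

lemma integral_exp_neg_mul_Ioi_zero {c : ℝ} (hc : 0 < c) :
    ∫ t in Ioi 0, exp (-c * t) = c⁻¹ := by
  rw [integral_exp_mul_Ioi (neg_neg_of_pos hc), mul_zero, exp_zero, neg_div_neg_eq, one_div]

lemma exp_allocation_le_exp_neg_min_mul {a b s t : ℝ} (hs0 : 0 ≤ s) (hst : s ≤ t) :
    exp (-s / a - (t - s) / b) ≤ exp (-min a⁻¹ b⁻¹ * t) := by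
  have hsa : min a⁻¹ b⁻¹ * s ≤ s / a := by
    rw [div_eq_inv_mul]; gcongr; exact min_le_left _ _
  have hsb : min a⁻¹ b⁻¹ * (t - s) ≤ (t - s) / b := by
    rw [div_eq_inv_mul]; gcongr; exact min_le_right _ _
  rw [exp_le_exp, neg_div]
  linarith

lemma integrableOn_exp_allocation {a b : ℝ} (ha : 0 < a) (hb : 0 < b) {g : ℝ → ℝ}
    (hg : Measurable g) (hg0 : ∀ t, 0 ≤ t → 0 ≤ g t) (hgt : ∀ t, 0 ≤ t → g t ≤ t) :
    IntegrableOn (fun t ↦ exp (-(g t) / a - (t - g t) / b)) (Ioi 0) := by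
  refine (exp_neg_integrableOn_Ioi 0 (lt_min (inv_pos.2 ha) (inv_pos.2 hb))).mono'
    (by fun_prop) ?_
  filter_upwards [ae_restrict_mem measurableSet_Ioi] with t ht
  rw [norm_of_nonneg (exp_nonneg _)]
  exact exp_allocation_le_exp_neg_min_mul (hg0 t (le_of_lt ht)) (hgt t (le_of_lt ht))

lemma two_mul_exp_le_exp_allocation_add_swap (a b s t : ℝ) :
    2 * exp (-((a⁻¹ + b⁻¹) / 2) * t) ≤
      exp (-s / a - (t - s) / b) + exp (-s / b - (t - s) / a) := by
  calc 2 * exp (-((a⁻¹ + b⁻¹) / 2) * t)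
        = 2 * exp (((-s / a - (t - s) / b) + (-s / b - (t - s) / a)) / 2) := by ring_nf
    _ ≤ _ := two_mul_exp_add_half_le _ _

/-- For any measurable allocation `g` with `0 ≤ g t ≤ t`, at least one of the two
assignments of exponential means `a, b` yields an expected mutual delay of at
least `2ab/(a+b)`. -/
theorem stmt_12
    (a b : ℝ) (ha : 0 < a) (hb : 0 < b)
    (g : ℝ → ℝ) (hg : Measurable g)
    (hg0 : ∀ t, 0 ≤ t → 0 ≤ g t) (hgt : ∀ t, 0 ≤ t → g t ≤ t) :
    2 * a * b / (a + b) ≤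
      max (∫ t in Set.Ioi (0 : ℝ), Real.exp (-(g t) / a - (t - g t) / b))
        (∫ t in Set.Ioi (0 : ℝ), Real.exp (-(g t) / b - (t - g t) / a)) := by
  have h₁ := integrableOn_exp_allocation ha hb hg hg0 hgt
  have h₂ := integrableOn_exp_allocation hb ha hg hg0 hgt
  set I₁ := ∫ t in Ioi 0, exp (-(g t) / a - (t - g t) / b)
  set I₂ := ∫ t in Ioi 0, exp (-(g t) / b - (t - g t) / a)
  have hc : 0 < (a⁻¹ + b⁻¹) / 2 := by positivity
  have hsum : 2 * (2 * a * b / (a + b)) ≤ I₁ + I₂ :=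
    calc 2 * (2 * a * b / (a + b)) = ∫ t in Ioi 0, 2 * exp (-((a⁻¹ + b⁻¹) / 2) * t) := by
          rw [integral_const_mul, integral_exp_neg_mul_Ioi_zero hc]
          field_simp
          ring
      _ ≤ ∫ t in Ioi 0, (exp (-(g t) / a - (t - g t) / b) +
            exp (-(g t) / b - (t - g t) / a)) :=
          integral_mono ((exp_neg_integrableOn_Ioi 0 hc).const_mul 2) (h₁.add h₂)
            fun t ↦ two_mul_exp_le_exp_allocation_add_swap a b (g t) t
      _ = I₁ + I₂ := integral_add h₁ h₂
  linarith [le_max_left I₁ I₂, le_max_right I₁ I₂]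
end

section
/- Let X_1, X_2, … be a sequence of independent Bernoulli random variables with mean μ ∈ (0,1), and let μ̂_s = (1/s)·Σ_{t=1}^s X_t. Let a > 0 and μ' ∈ (μ, 1), and define κ = Σ_{s=1}^∞ 1{ d̲(μ̂_s, μ') ≤ a/s }, where d̲(p, q) = d(p, q)·1{p ≤ q} and d(p, q) = p·log(p/q) + (1−p)·log((1−p)/(1−q)) is the Kullback–Leibler divergence between Bernoulli distributions of means p and q. Then for every ε ∈ (0, μ' − μ): E[κ] ≤ a/d(μ + ε, μ') + 1/d(μ + ε, μ). -/
open MeasureTheory ProbabilityTheory Finset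
open scoped ENNReal

/-!
Let `z = p + ε`. Writing `d(x, q) = q φ(x/q) + (1 - q) φ((1 - x)/(1 - q))` with
`φ = klFun` (decreasing on `[0, 1]`, increasing on `[1, ∞)`) shows that `d(·, q)` is strictly
decreasing on `[0, q]`. Hence, as soon as `s > a / d(z, q)`, the test
`d̲(μ̂_s, q) ≤ a / s < d(z, q)` forces `μ̂_s ≥ z`, and
`E[κ] ≤ #{s ≥ 1 | s ≤ a / d(z, q)} + ∑_s P(μ̂_s ≥ z)`. Chernoff's bound
`P(μ̂_s ≥ z) ≤ exp(-s d(z, p))` turns the second sum into a geometric series, bounded by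
`1 / (exp (d(z, p)) - 1) ≤ 1 / d(z, p)`.
-/

open Real InformationTheory unitInterval

noncomputable def bernKL (x y : ℝ) : ℝ :=
  x * log (x / y) + (1 - x) * log ((1 - x) / (1 - y))

lemma bernKL_self (x : ℝ) : bernKL x x = 0 := by
  simp [bernKL]

lemma bernKL_one_sub_one_sub (x y : ℝ) : bernKL (1 - x) (1 - y) = bernKL x y := by
  simp only [bernKL, sub_sub_cancel]
  ring

lemma bernKL_eq_klFun {x y : ℝ} (hy0 : 0 < y) (hy1 : y < 1) :
    bernKL x y = y * klFun (x / y) + (1 - y) * klFun ((1 - x) / (1 - y)) := by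
  have : 1 - y ≠ 0 := by linarith
  simp only [bernKL, klFun]
  field_simp
  ring

lemma klFun_strictAntiOn : StrictAntiOn klFun (Set.Icc 0 1) := by
  refine strictAntiOn_of_deriv_neg (convex_Icc 0 1) continuous_klFun.continuousOn fun x hx ↦ ?_
  rw [interior_Icc] at hx
  rw [deriv_klFun]
  exact log_neg hx.1 hx.2

lemma klFun_strictMonoOn : StrictMonoOn klFun (Set.Ici 1) := by
  refine strictMonoOn_of_deriv_pos (convex_Ici 1) continuous_klFun.continuousOn fun x hx ↦ ?_
  rw [interior_Ici] at hx
  rw [deriv_klFun]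
  exact log_pos hx

lemma bernKL_strictAntiOn {q : ℝ} (hq0 : 0 < q) (hq1 : q < 1) :
    StrictAntiOn (bernKL · q) (Set.Icc 0 q) := by
  intro x ⟨hx0, hxq⟩ y ⟨hy0, hyq⟩ hxy
  have h1q : 0 < 1 - q := by linarith
  have hleft : klFun (y / q) < klFun (x / q) :=
    klFun_strictAntiOn ⟨by positivity, (div_le_one hq0).2 hxq⟩
      ⟨by positivity, (div_le_one hq0).2 hyq⟩ (div_lt_div_of_pos_right hxy hq0)
  have hright : klFun ((1 - y) / (1 - q)) < klFun ((1 - x) / (1 - q)) :=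
    klFun_strictMonoOn ((one_le_div h1q).2 (by linarith)) ((one_le_div h1q).2 (by linarith))
      (div_lt_div_of_pos_right (by linarith) h1q)
  simp only [bernKL_eq_klFun hq0 hq1]
  gcongr

lemma bernKL_pos_of_lt {x q : ℝ} (hx : 0 ≤ x) (hxq : x < q) (hq : q < 1) : 0 < bernKL x q := by
  simpa [bernKL_self] using
    bernKL_strictAntiOn (hx.trans_lt hxq) hq ⟨hx, hxq.le⟩ ⟨(hx.trans_lt hxq).le, le_rfl⟩ hxq

lemma bernKL_pos_of_gt {x p : ℝ} (hp : 0 < p) (hpx : p < x) (hx : x ≤ 1) : 0 < bernKL x p := by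
  rw [← bernKL_one_sub_one_sub]
  exact bernKL_pos_of_lt (by linarith) (by linarith) (by linarith)

lemma le_of_ite_bernKL_lt {m z q : ℝ} (hm : 0 ≤ m) (hzq : z ≤ q) (hq : q < 1)
    (h : (if m ≤ q then bernKL m q else 0) < bernKL z q) : z ≤ m := by
  by_contra! hmz
  rw [if_pos (hmz.le.trans hzq)] at h
  exact h.not_gt <| bernKL_strictAntiOn (hm.trans_lt (hmz.trans_le hzq)) hq
    ⟨hm, (hmz.trans_le hzq).le⟩ ⟨hm.trans hmz.le, hzq⟩ hmz

lemma bernoulliMeasure_one_zero_eq (p : I) :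
    Ber((1 : ℝ), 0, p) =
      ENNReal.ofReal (1 - p) • Measure.dirac 0 + ENNReal.ofReal p • Measure.dirac 1 := by
  rw [bernoulliMeasure_def, add_comm, ← coe_symm_eq]
  congr 2 <;> ext <;> simp [p.2.1, p.2.2]

section Bernoulli

variable {Ω : Type*} [MeasurableSpace Ω] {μ : Measure Ω} {p : I}

lemma ae_nonneg_of_map_eq_bernoulliMeasure {Y : Ω → ℝ} (hY : Measurable Y)
    (hlaw : μ.map Y = Ber(1, 0, p)) : ∀ᵐ ω ∂μ, 0 ≤ Y ω := by
  refine ae_of_ae_map hY.aemeasurable ?_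
  rw [hlaw, ae_iff]
  simpa using bernoulliMeasure_apply_of_notMem_of_notMem p (measurableSet_lt measurable_id
    measurable_const : MeasurableSet {x : ℝ | x < 0}) (by norm_num) (by norm_num)

lemma integrable_exp_mul_of_map_eq_bernoulliMeasure {Y : Ω → ℝ} (hY : Measurable Y)
    (hlaw : μ.map Y = Ber(1, 0, p)) (θ : ℝ) : Integrable (fun ω ↦ exp (θ * Y ω)) μ := by
  have hexp : Measurable fun x : ℝ ↦ exp (θ * x) := by fun_prop
  refine (integrable_map_measure hexp.aestronglyMeasurable hY.aemeasurable).1 ?_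
  rw [hlaw]
  exact integrable_bernoulliMeasure _ _ _ _

lemma mgf_of_map_eq_bernoulliMeasure {Y : Ω → ℝ} (hY : Measurable Y)
    (hlaw : μ.map Y = Ber(1, 0, p)) (θ : ℝ) : mgf Y μ θ = p * exp θ + (1 - p) := by
  rw [← mgf_id_map hY.aemeasurable, hlaw, mgf, integral_bernoulliMeasure]
  simp

lemma measure_le_sum_range_le_exp_bernKL [IsProbabilityMeasure μ] {X : ℕ → Ω → ℝ}
    (hmeas : ∀ t, Measurable (X t)) (hlaw : ∀ t, μ.map (X t) = Ber(1, 0, p))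
    (hindep : iIndepFun X μ) {z : ℝ} (hp : 0 < (p : ℝ)) (hpz : p < z) (hz : z < 1) (s : ℕ) :
    μ {ω | s * z ≤ ∑ t ∈ range s, X t ω} ≤ ENNReal.ofReal (exp (-s * bernKL z p)) := by
  have hp1 : (p : ℝ) < 1 := hpz.trans hz
  have hz0 : 0 < z := hp.trans hpz
  have h1z : 0 < 1 - z := by linarith
  have h1p : 0 < 1 - (p : ℝ) := by linarith
  set θ := log (z * (1 - p) / ((1 - z) * p))
  have hθ : 0 ≤ θ := log_nonneg <| (one_le_div (by positivity)).2 (by nlinarith)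
  have hexpθ : exp θ = z * (1 - p) / ((1 - z) * p) := exp_log (by positivity)
  have hint := fun t (_ : t ∈ range s) ↦
    integrable_exp_mul_of_map_eq_bernoulliMeasure (hmeas t) (hlaw t) θ
  have hcgf : ∀ t, cgf (X t) μ θ = log ((1 - p) / (1 - z)) := fun t ↦ by
    rw [cgf, mgf_of_map_eq_bernoulliMeasure (hmeas t) (hlaw t), hexpθ]
    congr 1
    field_simp
    ring
  have hchernoff :=
    measure_ge_le_exp_cgf (μ := μ) (s * z) hθ (hindep.integrable_exp_mul_sum hmeas hint)
  rw [hindep.cgf_sum hmeas hint] at hchernoff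
  have hexponent : -θ * (s * z) + ∑ t ∈ range s, cgf (X t) μ θ = -s * bernKL z p := by
    simp only [hcgf, sum_const, card_range, nsmul_eq_mul, bernKL, θ]
    rw [log_div (by positivity) (by positivity), log_mul hz0.ne' h1p.ne', log_mul h1z.ne' hp.ne',
      log_div h1p.ne' h1z.ne', log_div hz0.ne' hp.ne', log_div h1z.ne' h1p.ne']
    ring
  rw [hexponent, measureReal_def] at hchernoff
  rw [ENNReal.le_ofReal_iff_toReal_le (measure_ne_top _ _) (exp_pos _).le]
  simpa only [Finset.sum_apply] using hchernoff

lemma measure_le_sampleMean_succ_le_exp_bernKL [IsProbabilityMeasure μ] {X : ℕ → Ω → ℝ}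
    (hmeas : ∀ t, Measurable (X t)) (hlaw : ∀ t, μ.map (X t) = Ber(1, 0, p))
    (hindep : iIndepFun X μ) {z : ℝ} (hp : 0 < (p : ℝ)) (hpz : p < z) (hz : z < 1) (s : ℕ) :
    μ {ω | z ≤ (∑ t ∈ range (s + 1), X t ω) / ((s : ℝ) + 1)} ≤
      ENNReal.ofReal (exp (-((s : ℝ) + 1) * bernKL z p)) := by
  have hchernoff := measure_le_sum_range_le_exp_bernKL hmeas hlaw hindep hp hpz hz (s + 1)
  push_cast at hchernoff
  refine (measure_mono fun ω (hω : z ≤ _) ↦ ?_).trans hchernoff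
  exact (mul_comm _ _).trans_le ((le_div_iff₀ (by positivity)).1 hω)

lemma lintegral_le_add_tsum_measure [IsProbabilityMeasure μ] {κ : Ω → ℝ≥0∞} {C : ℝ≥0∞}
    {F : ℕ → Set Ω} (hF : ∀ s, MeasurableSet (F s))
    (hκ : ∀ᵐ ω ∂μ, κ ω ≤ C + ∑' s, (F s).indicator 1 ω) :
    ∫⁻ ω, κ ω ∂μ ≤ C + ∑' s, μ (F s) := by
  refine (lintegral_mono_ae hκ).trans_eq ?_
  rw [lintegral_add_left measurable_const, lintegral_const, measure_univ, mul_one,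
    lintegral_tsum fun s ↦ (measurable_one.indicator (hF s)).aemeasurable]
  simp_rw [lintegral_indicator_one (hF _)]

end Bernoulli

lemma tsum_ite_succ_le_le_ofReal (c : ℝ) :
    ∑' s : ℕ, (if (s : ℝ) + 1 ≤ c then (1 : ℝ≥0∞) else 0) ≤ ENNReal.ofReal c := by
  have hvanish : ∀ s ∉ range ⌊c⌋₊, (if (s : ℝ) + 1 ≤ c then (1 : ℝ≥0∞) else 0) = 0 := by
    intro s hs
    rw [mem_range, not_lt] at hs
    refine if_neg fun hsc ↦ ?_
    have : s + 1 ≤ ⌊c⌋₊ := Nat.le_floor (by push_cast; exact hsc)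
    omega
  rw [tsum_eq_sum hvanish]
  calc ∑ s ∈ range ⌊c⌋₊, (if (s : ℝ) + 1 ≤ c then (1 : ℝ≥0∞) else 0)
      ≤ ∑ s ∈ range ⌊c⌋₊, 1 := sum_le_sum fun s _ ↦ by split_ifs <;> simp
    _ = ENNReal.ofReal ⌊c⌋₊ := by simp
    _ ≤ ENNReal.ofReal c := by
      rcases le_total 0 c with hc | hc
      · exact ENNReal.ofReal_le_ofReal (Nat.floor_le hc)
      · simp [Nat.floor_of_nonpos hc]

lemma tsum_ofReal_exp_neg_succ_mul_le {c : ℝ} (hc : 0 < c) :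
    ∑' s : ℕ, ENNReal.ofReal (exp (-((s : ℝ) + 1) * c)) ≤ ENNReal.ofReal (1 / c) := by
  set r := exp (-c)
  have hr0 : 0 ≤ r := (exp_pos _).le
  have hr1 : r < 1 := exp_lt_one_iff.2 (by linarith)
  have hterm : ∀ s : ℕ, exp (-((s : ℝ) + 1) * c) = r ^ s * r := fun s ↦ by
    rw [← pow_succ, ← exp_nat_mul]
    push_cast
    ring_nf
  have hsum : HasSum (fun s : ℕ ↦ r ^ s * r) ((1 - r)⁻¹ * r) :=
    (hasSum_geometric_of_lt_one hr0 hr1).mul_right r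
  simp_rw [hterm]
  rw [← ENNReal.ofReal_tsum_of_nonneg (fun s ↦ by positivity) hsum.summable, hsum.tsum_eq]
  refine ENNReal.ofReal_le_ofReal ?_
  have hrc : r * exp c = 1 := by rw [← exp_add]; simp
  have := add_one_le_exp c
  rw [inv_mul_eq_div, div_le_div_iff₀ (by linarith) hc]
  nlinarith

lemma ite_bernKL_le_ite_add_ite {m z q a n : ℝ} (hm : 0 ≤ m) (hz : 0 ≤ z) (hzq : z < q)
    (hq : q < 1) (hn : 0 < n) :
    (if (if m ≤ q then bernKL m q else 0) ≤ a / n then (1 : ℝ≥0∞) else 0) ≤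
      (if n ≤ a / bernKL z q then 1 else 0) + (if z ≤ m then 1 else 0) := by
  have hc : 0 < bernKL z q := bernKL_pos_of_lt hz hzq hq
  by_cases hna : n ≤ a / bernKL z q
  · simp only [if_pos hna]
    exact (ite_le_one le_rfl zero_le_one).trans le_self_add
  rw [if_neg hna, zero_add]
  have han : a / n < bernKL z q := by
    rw [div_lt_iff₀ hn]
    rw [not_le, div_lt_iff₀ hc] at hna
    linarith
  by_cases hzm : z ≤ m
  · simp only [if_pos hzm]
    exact ite_le_one le_rfl zero_le_one
  rw [if_neg hzm, if_neg fun htest ↦ hzm (le_of_ite_bernKL_lt hm hzq.le hq (htest.trans_lt han))]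

/-- Expected number of times the one-sided KL lower-confidence test
`d̲(μ̂_s, μ') ≤ a/s` succeeds, for i.i.d. Bernoulli(μ) samples and `μ' > μ`:
for every `ε ∈ (0, μ' − μ)`, `E[κ] ≤ a/d(μ+ε, μ') + 1/d(μ+ε, μ)`. -/
theorem stmt_13
    {Ω : Type*} [MeasurableSpace Ω] (μ : Measure Ω) [IsProbabilityMeasure μ]
    (p : ℝ) (hp : p ∈ Set.Ioo (0 : ℝ) 1)
    (X : ℕ → Ω → ℝ)
    (hmeas : ∀ t, Measurable (X t))
    -- each `X t` is Bernoulli with mean `p`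
    (hdist : ∀ t, Measure.map (X t) μ =
      ENNReal.ofReal (1 - p) • Measure.dirac (0 : ℝ) +
        ENNReal.ofReal p • Measure.dirac (1 : ℝ))
    (hindep : iIndepFun X μ)
    (muhat : ℕ → Ω → ℝ)
    (hmuhat : ∀ s ω, muhat s ω = (∑ t ∈ Finset.range s, X t ω) / s)
    -- Bernoulli Kullback-Leibler divergence and its one-sided version
    (d dlow : ℝ → ℝ → ℝ)
    (hd : ∀ x y, d x y = x * Real.log (x / y) + (1 - x) * Real.log ((1 - x) / (1 - y)))
    (hdlow : ∀ x y, dlow x y = if x ≤ y then d x y else 0)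
    (a : ℝ) (ha : 0 < a)
    (q : ℝ) (hq : q ∈ Set.Ioo p 1)
    (κ : Ω → ℝ≥0∞)
    (hκ : ∀ ω, κ ω = ∑' s : ℕ,
      if dlow (muhat (s + 1) ω) q ≤ a / ((s : ℝ) + 1) then (1 : ℝ≥0∞) else 0)
    (ε : ℝ) (hε : ε ∈ Set.Ioo 0 (q - p)) :
    ∫⁻ ω, κ ω ∂μ ≤ ENNReal.ofReal (a / d (p + ε) q + 1 / d (p + ε) p) := by
  obtain ⟨hp0, hp1⟩ := hp
  obtain ⟨-, hq1⟩ := hq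
  have hpz : p < p + ε := by linarith [hε.1]
  have hzq : p + ε < q := by linarith [hε.2]
  obtain rfl : d = bernKL := funext₂ hd
  obtain rfl : dlow = fun x y ↦ if x ≤ y then bernKL x y else 0 := funext₂ hdlow
  obtain rfl : muhat = fun s ω ↦ (∑ t ∈ range s, X t ω) / s := funext₂ hmuhat
  generalize p + ε = z at hpz hzq ⊢
  have hc₂ : 0 < bernKL z p := bernKL_pos_of_gt hp0 hpz (by linarith)
  have hlaw : ∀ t, μ.map (X t) = Ber(1, 0, ⟨p, hp0.le, hp1.le⟩) :=
    fun t ↦ (hdist t).trans (bernoulliMeasure_one_zero_eq ⟨p, hp0.le, hp1.le⟩).symm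
  set F : ℕ → Set Ω := fun s ↦ {ω | z ≤ (∑ t ∈ range (s + 1), X t ω) / ((s : ℝ) + 1)}
  have hF : ∀ s, MeasurableSet (F s) := fun s ↦ measurableSet_le measurable_const (by fun_prop)
  have hκ_le : ∀ᵐ ω ∂μ, κ ω ≤ (∑' s : ℕ, if (s : ℝ) + 1 ≤ a / bernKL z q then 1 else 0) +
      ∑' s, (F s).indicator 1 ω := by
    filter_upwards [ae_all_iff.2 fun t ↦ ae_nonneg_of_map_eq_bernoulliMeasure (hmeas t) (hlaw t)]
      with ω hω
    rw [hκ, ← ENNReal.tsum_add]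
    refine ENNReal.tsum_le_tsum fun s ↦ (ite_bernKL_le_ite_add_ite
      (div_nonneg (sum_nonneg fun t _ ↦ hω t) (Nat.cast_nonneg _)) (by linarith) hzq hq1
      (by positivity)).trans_eq ?_
    simp [F, Set.indicator_apply]
  have hc₁ : 0 < bernKL z q := bernKL_pos_of_lt (by linarith) hzq hq1
  calc ∫⁻ ω, κ ω ∂μ
      ≤ (∑' s : ℕ, if (s : ℝ) + 1 ≤ a / bernKL z q then 1 else 0) + ∑' s, μ (F s) :=
        lintegral_le_add_tsum_measure hF hκ_le
    _ ≤ ENNReal.ofReal (a / bernKL z q) + ENNReal.ofReal (1 / bernKL z p) := by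
        gcongr
        · exact tsum_ite_succ_le_le_ofReal _
        · exact (ENNReal.tsum_le_tsum fun s ↦ measure_le_sampleMean_succ_le_exp_bernKL hmeas
            hlaw hindep hp0 hpz (hzq.trans hq1) s).trans (tsum_ofReal_exp_neg_succ_mul_le hc₂)
    _ = ENNReal.ofReal (a / bernKL z q + 1 / bernKL z p) :=
        (ENNReal.ofReal_add (by positivity) (by positivity)).symm
end

section
/- Let 0 < λ_ℓ < λ_k and let Δ satisfy 0 < Δ ≤ λ_ℓ/4. Then (1 − exp(−Δ/λ_ℓ)) − (1 − exp(−Δ/λ_k)) ≥ Δ·(λ_k − λ_ℓ)/(1.46·λ_k·λ_ℓ). -/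
/-!
With `a = Δ/λ_k ≤ b = Δ/λ_ℓ ≤ 1/4`, the gap is `e^{-a} - e^{-b} = e^{-b}(e^{b-a} - 1) ≥ (1 - b)(b - a)`,
and `1 - b ≥ 3/4 > 1/1.46`, while `b - a = Δ(λ_k - λ_ℓ)/(λ_k λ_ℓ)`.
-/

open Real

theorem one_sub_mul_sub_le_exp_neg_sub_exp_neg {x y : ℝ} (hxy : x ≤ y) :
    (1 - y) * (y - x) ≤ exp (-x) - exp (-y) := by
  have hfactor : exp (-x) - exp (-y) = exp (-y) * (exp (y - x) - 1) := by
    rw [mul_sub, mul_one, ← exp_add]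
    ring_nf
  rw [hfactor]
  calc (1 - y) * (y - x) ≤ exp (-y) * (y - x) :=
        mul_le_mul_of_nonneg_right (by linarith [add_one_le_exp (-y)]) (sub_nonneg.2 hxy)
    _ ≤ exp (-y) * (exp (y - x) - 1) :=
        mul_le_mul_of_nonneg_left (by linarith [add_one_le_exp (y - x)]) (exp_pos _).le

/-- Gap between per-window termination probabilities of exponential jobs:
for `0 < λ_ℓ < λ_k` and `0 < Δ ≤ λ_ℓ/4`,
`(1 − e^{−Δ/λ_ℓ}) − (1 − e^{−Δ/λ_k}) ≥ Δ(λ_k − λ_ℓ)/(1.46·λ_k·λ_ℓ)`. -/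
theorem stmt_17
    (laml lamk Δ : ℝ) (hl : 0 < laml) (hlk : laml < lamk)
    (hΔ0 : 0 < Δ) (hΔ : Δ ≤ laml / 4) :
    Δ * (lamk - laml) / (1.46 * lamk * laml) ≤
      (1 - Real.exp (-Δ / laml)) - (1 - Real.exp (-Δ / lamk)) := by
  have hk : 0 < lamk := hl.trans hlk
  have hab : Δ / lamk ≤ Δ / laml := div_le_div_of_nonneg_left hΔ0.le hl hlk.le
  have hb : Δ / laml ≤ 1 / 4 := by
    rw [div_le_iff₀ hl]
    linarith
  have hgap : Δ * (lamk - laml) / (1.46 * lamk * laml) = (Δ / laml - Δ / lamk) / 1.46 := by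
    field_simp
  rw [hgap, neg_div, neg_div]
  calc (Δ / laml - Δ / lamk) / 1.46 ≤ (1 - Δ / laml) * (Δ / laml - Δ / lamk) := by
        rw [div_le_iff₀ (by norm_num)]
        nlinarith
    _ ≤ exp (-(Δ / lamk)) - exp (-(Δ / laml)) := one_sub_mul_sub_le_exp_neg_sub_exp_neg hab
    _ = _ := by ring
end
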